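/- arXiv:2106.13922 — 2 statements merged into one kernel-verified Lean document; each statement's English description precedes it below -/
import Mathlib

section
/- Setting X_i = x_i(1 + β x_{i+1}), for any sequence u_1, ..., u_n where each u_j ∈ {x_i, X_i}, the divided difference satisfies ∂_i(u_1⋯u_n) = Σ_{j=1}^n s_i(u_1⋯u_{j-1})·u_{j+1}⋯u_n. -/
open MvPolynomial
set_option maxRecDepth 4000

noncomputable section

abbrev R : Type := MvPolynomial ℕ (Polynomial ℤ)

/-- The parameter `β`, as an element of `R = ℤ[β][x₀,x₁,…]`. -/
def bb : R := MvPolynomial.C Polynomial.X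

/-- `sw i` exchanges the variables `x_i` and `x_{i+1}`. -/
def sw (i : ℕ) (f : R) : R := MvPolynomial.rename (Equiv.swap i (i + 1)) f

lemma sw_mul (i : ℕ) (a b : R) : sw i (a * b) = sw i a * sw i b := by
  simp [sw, map_mul]

lemma sw_one (i : ℕ) : sw i 1 = 1 := by simp [sw]

lemma sw_u (i : ℕ) (f : R) (h : f = X i ∨ f = X i * (1 + bb * X (i + 1))) :
    f - sw i f = X i - X (i + 1) := by
  rcases h with h | h <;> subst h <;>
    simp [sw, bb, map_mul, map_add, map_one, rename_X, rename_C,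
      Equiv.swap_apply_left, Equiv.swap_apply_right] <;> ring

/-- Setting `X_i = x_i(1 + β x_{i+1})`, for any sequence `u_1, …, u_n` with each
`u_j ∈ {x_i, X_i}`, the divided difference (characterized by
`(x_i - x_{i+1})·∂_i f = f - s_i f`) satisfies
`∂_i(u_1⋯u_n) = Σ_j s_i(u_1⋯u_{j-1})·u_{j+1}⋯u_n`. -/
theorem stmt6 (i : ℕ) (D : R → R)
    (hD : ∀ f : R, (X i - X (i + 1)) * D f = f - sw i f)
    (n : ℕ) (u : Fin n → R)
    (hu : ∀ j, u j = X i ∨ u j = X i * (1 + bb * X (i + 1))) :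
    D (∏ j, u j) =
      ∑ j : Fin n,
        sw i (∏ k ∈ Finset.univ.filter (fun k => k < j), u k) *
          ∏ k ∈ Finset.univ.filter (fun k => j < k), u k := by
  have hc : (X i - X (i + 1) : R) ≠ 0 := by
    apply sub_ne_zero.mpr
    intro h
    have := MvPolynomial.X_injective h
    omega
  apply mul_left_cancel₀ hc
  rw [hD]
  symm
  set g : ℕ → R := fun m =>
    sw i (∏ k ∈ Finset.univ.filter (fun k : Fin n => (k : ℕ) < m), u k) *
      ∏ k ∈ Finset.univ.filter (fun k : Fin n => m ≤ (k : ℕ)), u k with hg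
  have key : ∀ j : Fin n, (X i - X (i + 1)) *
      (sw i (∏ k ∈ Finset.univ.filter (fun k => k < j), u k) *
        ∏ k ∈ Finset.univ.filter (fun k => j < k), u k) = g ↑j - g (↑j + 1) := by
    intro j
    have hA : (Finset.univ.filter (fun k : Fin n => (k : ℕ) < (j : ℕ)))
        = Finset.univ.filter (fun k => k < j) := by
      apply Finset.filter_congr; intro k _; exact Iff.rfl
    have hB : (Finset.univ.filter (fun k : Fin n => (j : ℕ) ≤ (k : ℕ)))
        = insert j (Finset.univ.filter (fun k => j < k)) := by
      ext k
      simp only [Finset.mem_filter, Finset.mem_univ, true_and, Finset.mem_insert,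
        Fin.lt_def, Fin.ext_iff]
      omega
    have hC : (Finset.univ.filter (fun k : Fin n => (k : ℕ) < (j : ℕ) + 1))
        = insert j (Finset.univ.filter (fun k : Fin n => (k : ℕ) < (j : ℕ))) := by
      ext k
      simp only [Finset.mem_filter, Finset.mem_univ, true_and, Finset.mem_insert,
        Fin.ext_iff]
      omega
    have hD' : (Finset.univ.filter (fun k : Fin n => (j : ℕ) + 1 ≤ (k : ℕ)))
        = Finset.univ.filter (fun k => j < k) := by
      apply Finset.filter_congr; intro k _
      rw [Fin.lt_def]; omega
    have hjB : j ∉ Finset.univ.filter (fun k => j < k) := by simp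
    have hjC : j ∉ Finset.univ.filter (fun k : Fin n => k < j) := by simp
    simp only [hg, hA, hB, hC, hD']
    rw [Finset.prod_insert hjB, Finset.prod_insert hjC, sw_mul]
    have := sw_u i (u j) (hu j)
    rw [show (X i : R) - X (i + 1) = u j - sw i (u j) from this.symm]
    ring
  calc (X i - X (i + 1)) * ∑ j : Fin n,
        sw i (∏ k ∈ Finset.univ.filter (fun k => k < j), u k) *
          ∏ k ∈ Finset.univ.filter (fun k => j < k), u k
      = ∑ j : Fin n, (g ↑j - g (↑j + 1)) := by
        rw [Finset.mul_sum]; exact Finset.sum_congr rfl fun j _ => key j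
    _ = ∑ m ∈ Finset.range n, (g m - g (m + 1)) :=
        Fin.sum_univ_eq_sum_range (fun m => g m - g (m + 1)) n
    _ = g 0 - g n := Finset.sum_range_sub' g n
    _ = (∏ j, u j) - sw i (∏ j, u j) := by
        have h0l : (Finset.univ.filter (fun k : Fin n => (k : ℕ) < 0)) = ∅ := by
          ext k; simp
        have h0r : (Finset.univ.filter (fun k : Fin n => 0 ≤ (k : ℕ))) = Finset.univ := by
          ext k; simp
        have hnl : (Finset.univ.filter (fun k : Fin n => (k : ℕ) < n)) = Finset.univ := by
          ext k; simp [k.isLt]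
        have hnr : (Finset.univ.filter (fun k : Fin n => n ≤ (k : ℕ))) = ∅ := by
          ext k; simp
        simp [hg, h0l, h0r, hnl, hnr, sw_one]
end
end

section
/- For a decreasing tableau P of partition shape, the right key K_+(P), whose j-th column is ∅ ⋆ word(P_{≥j}) (where P_{≥j} drops the first j−1 columns and word is the bottom-to-top, left-to-right column reading word), is itself a key: each column contains the next column as a set. -/
/-- The `⋆` column-bumping action of a single letter `m` on a finite set `S`:
if no element of `S` is `≥ m`, then `S ⋆ m = S ∪ {m}`; otherwise
`S ⋆ m = (S \ {m'}) ∪ {m}` where `m'` is the smallest element of `S` with `m' ≥ m`. -/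
def starLetter (S : Finset ℕ) (m : ℕ) : Finset ℕ :=
  if h : (S.filter (fun s => m ≤ s)).Nonempty then
    insert m (S.erase ((S.filter (fun s => m ≤ s)).min' h))
  else insert m S

/-- The `⋆` action of a word, letter by letter from the left. -/
def star (S : Finset ℕ) (w : List ℕ) : Finset ℕ :=
  w.foldl starLetter S

/-- A decreasing tableau, represented by its list of columns (each column listed
top to bottom): entries strictly decrease down each column, column lengths weakly
decrease left to right, and entries strictly decrease along rows left to right. -/
def IsDecTab (T : List (List ℕ)) : Prop :=
  (∀ col ∈ T, List.Chain' (· > ·) col) ∧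
  List.Chain' (fun C D : List ℕ => D.length ≤ C.length ∧
    ∀ r : ℕ, r < D.length → D.getD r 0 < C.getD r 0) T

/-- The column reading word: each column read bottom to top, columns left to right. -/
def colWord (T : List (List ℕ)) : List ℕ :=
  (T.map List.reverse).flatten

/-- The `j`-th column (0-indexed) of the right key `K₊(T)`:
`∅ ⋆ word(T_{≥ j})`, where `T_{≥ j}` drops the first `j` columns of `T`. -/
def Kcol (T : List (List ℕ)) (j : ℕ) : Finset ℕ :=
  star ∅ (colWord (T.drop j))

/-!
Reading the increasing word `C.reverse` into `∅` produces exactly the set of entries of `C`, so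
the `j`-th column of the key is `C_j ⋆ word(P_{>j})`, while the next one is `∅ ⋆ word(P_{>j})`;
the inclusion is monotonicity of `⋆` in the set.

For the size, say that `S` dominates `A` if above every threshold `S` has at least as many elements
as `A`. Inserting into `S` a letter of a set `A` dominated by `S` always bumps an element, and the
new set dominates the rest of `A`. The row condition makes each column dominated by the previous
one, and reading a column from bottom to top leaves all of its entries in the set, so starting from
`C_j` every letter of `word(P_{>j})` bumps and the size stays `|C_j|`.
-/

open Finset

@[simp] lemma star_nil (S : Finset ℕ) : star S [] = S := rfl

@[simp] lemma star_cons (S : Finset ℕ) (m : ℕ) (w : List ℕ) :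
    star S (m :: w) = star (starLetter S m) w := rfl

lemma star_append (S : Finset ℕ) (u v : List ℕ) : star S (u ++ v) = star (star S u) v :=
  List.foldl_append ..

lemma mem_starLetter {S : Finset ℕ} {m x : ℕ} :
    x ∈ starLetter S m ↔ x = m ∨ x ∈ S ∧ (m ≤ x → ∃ s ∈ S, m ≤ s ∧ s < x) := by
  unfold starLetter
  split_ifs with h
  · rw [mem_insert, mem_erase]
    refine or_congr_right ⟨fun ⟨hne, hx⟩ => ⟨hx, fun hmx => ?_⟩, fun ⟨hx, hlt⟩ => ⟨?_, hx⟩⟩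
    · have hmin := min'_mem _ h
      exact ⟨_, (mem_filter.mp hmin).1, (mem_filter.mp hmin).2,
        lt_of_le_of_ne (min'_le _ _ (mem_filter.mpr ⟨hx, hmx⟩)) (Ne.symm hne)⟩
    · rintro rfl
      obtain ⟨s, hs, hms, hsx⟩ := hlt (mem_filter.mp (min'_mem _ h)).2
      exact hsx.not_ge (min'_le _ _ (mem_filter.mpr ⟨hs, hms⟩))
  · simp only [filter_nonempty_iff, not_exists, not_and, not_le] at h
    rw [mem_insert]
    exact or_congr_right ⟨fun hx => ⟨hx, fun hmx => absurd (h x hx) hmx.not_gt⟩, And.left⟩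

lemma starLetter_eq_insert_erase {S : Finset ℕ} {m : ℕ} (h : ∃ s ∈ S, m ≤ s) :
    ∃ m' ∈ S, m ≤ m' ∧ (∀ s ∈ S, m ≤ s → m' ≤ s) ∧ starLetter S m = insert m (S.erase m') := by
  have hne : (S.filter (m ≤ ·)).Nonempty := by simpa [filter_nonempty_iff] using h
  have hmin := mem_filter.mp (min'_mem _ hne)
  exact ⟨_, hmin.1, hmin.2, fun s hs hms => min'_le _ _ (mem_filter.mpr ⟨hs, hms⟩),
    by rw [starLetter, dif_pos hne]⟩

lemma starLetter_mono {S S' : Finset ℕ} (h : S ⊆ S') (m : ℕ) :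
    starLetter S m ⊆ starLetter S' m := by
  intro x hx
  rw [mem_starLetter] at hx ⊢
  rcases hx with rfl | ⟨hx, hbump⟩
  · exact .inl rfl
  · refine .inr ⟨h hx, fun hmx => ?_⟩
    obtain ⟨s, hs, hlt⟩ := hbump hmx
    exact ⟨s, h hs, hlt⟩

lemma star_mono (w : List ℕ) {S S' : Finset ℕ} (h : S ⊆ S') : star S w ⊆ star S' w := by
  induction w generalizing S S' with
  | nil => exact h
  | cons m w ih => exact ih (starLetter_mono h m)

lemma card_starLetter_le (S : Finset ℕ) (m : ℕ) : #(starLetter S m) ≤ #S + 1 := by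
  unfold starLetter
  split_ifs
  · exact (card_insert_le _ _).trans (Nat.succ_le_succ card_erase_le)
  · exact card_insert_le _ _

lemma card_star_le (S : Finset ℕ) (w : List ℕ) : #(star S w) ≤ #S + w.length := by
  induction w generalizing S with
  | nil => simp
  | cons m w ih =>
    have := ih (starLetter S m)
    have := card_starLetter_le S m
    rw [star_cons, List.length_cons]
    omega

lemma card_starLetter_of_exists {S : Finset ℕ} {m : ℕ} (h : ∃ s ∈ S, m ≤ s) :
    #(starLetter S m) = #S := by
  obtain ⟨m', hm'S, hmm', hmin, hstar⟩ := starLetter_eq_insert_erase h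
  have hm : m ∉ S.erase m' := fun hm =>
    (mem_erase.mp hm).1 (le_antisymm hmm' (hmin m (mem_erase.mp hm).2 le_rfl))
  rw [hstar, card_insert_of_notMem hm, card_erase_add_one hm'S]

lemma mem_star_of_forall_lt {S : Finset ℕ} {x : ℕ} (w : List ℕ) (hx : x ∈ S)
    (hw : ∀ y ∈ w, x < y) : x ∈ star S w := by
  induction w generalizing S with
  | nil => exact hx
  | cons m w ih =>
    refine ih (mem_starLetter.mpr (.inr ⟨hx, fun hmx => ?_⟩)) fun y hy => hw y (by simp [hy])
    exact absurd (hw m List.mem_cons_self) hmx.not_gt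

lemma toFinset_subset_star {w : List ℕ} (hw : w.Pairwise (· < ·)) (S : Finset ℕ) :
    w.toFinset ⊆ star S w := by
  induction w generalizing S with
  | nil => simp
  | cons m w ih =>
    rw [List.pairwise_cons] at hw
    intro x hx
    rcases List.mem_cons.mp (List.mem_toFinset.mp hx) with rfl | hx
    · exact mem_star_of_forall_lt w (mem_starLetter.mpr (.inl rfl)) hw.1
    · exact ih hw.2 _ (List.mem_toFinset.mpr hx)

lemma star_empty_eq_toFinset {w : List ℕ} (hw : w.Pairwise (· < ·)) : star ∅ w = w.toFinset := by
  refine (eq_of_subset_of_card_le (toFinset_subset_star hw ∅) ?_).symm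
  rw [List.toFinset_card_of_nodup (hw.imp ne_of_lt)]
  simpa using card_star_le ∅ w

def Dominates (S A : Finset ℕ) : Prop :=
  ∀ x, #(A.filter (x ≤ ·)) ≤ #(S.filter (x ≤ ·))

lemma dominates_of_subset {S A : Finset ℕ} (h : A ⊆ S) : Dominates S A :=
  fun _ => card_le_card (filter_subset_filter _ h)

lemma Dominates.trans {S A B : Finset ℕ} (hSA : Dominates S A) (hAB : Dominates A B) :
    Dominates S B :=
  fun x => (hAB x).trans (hSA x)

lemma Dominates.exists_le {S A : Finset ℕ} (hSA : Dominates S A) {m : ℕ} (hm : m ∈ A) :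
    ∃ s ∈ S, m ≤ s := by
  have hpos : 0 < #(S.filter (m ≤ ·)) :=
    (card_pos.mpr ⟨m, mem_filter.mpr ⟨hm, le_rfl⟩⟩).trans_le (hSA m)
  simpa [filter_nonempty_iff] using card_pos.mp hpos

lemma Dominates.starLetter_erase {S A : Finset ℕ} {m : ℕ} (hSA : Dominates S A) (hm : m ∈ A) :
    Dominates (starLetter S m) (A.erase m) := by
  obtain ⟨m', hm'S, hmm', hmin, hstar⟩ := starLetter_eq_insert_erase (hSA.exists_le hm)
  intro x
  rw [hstar, filter_insert, filter_erase, filter_erase]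
  by_cases hxm : x ≤ m
  · have hmS : m ∉ (S.filter (x ≤ ·)).erase m' := fun h =>
      (mem_erase.mp h).1 (le_antisymm hmm' (hmin m (mem_filter.mp (mem_erase.mp h).2).1 le_rfl))
    rw [if_pos hxm, card_insert_of_notMem hmS,
      card_erase_add_one (mem_filter.mpr ⟨hm'S, hxm.trans hmm'⟩),
      card_erase_of_mem (mem_filter.mpr ⟨hm, hxm⟩)]
    exact Nat.sub_le_of_le_add ((hSA x).trans (Nat.le_succ _))
  · have hmx : m < x := not_le.mp hxm
    have hmA : m ∉ A.filter (x ≤ ·) := fun h => hxm (mem_filter.mp h).2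
    rw [if_neg hxm, erase_eq_of_notMem hmA]
    by_cases hxm' : x ≤ m'
    · have hSx : S.filter (x ≤ ·) = S.filter (m ≤ ·) := filter_congr fun s hs =>
        ⟨fun hxs => hmx.le.trans hxs, fun hms => hxm'.trans (hmin s hs hms)⟩
      have hAx : #(A.filter (x ≤ ·)) < #(A.filter (m ≤ ·)) := card_lt_card
        ⟨monotone_filter_right _ fun _ _ hxa => hmx.le.trans hxa,
          fun h => hmA (h (mem_filter.mpr ⟨hm, le_rfl⟩))⟩
      have := hSA m
      have := pred_card_le_card_erase (s := S.filter (x ≤ ·)) (a := m')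
      rw [hSx] at this ⊢
      omega
    · rw [erase_eq_of_notMem fun h => hxm' (mem_filter.mp h).2]
      exact hSA x

lemma card_star_of_dominates {w : List ℕ} (hw : w.Nodup) {S : Finset ℕ}
    (hS : Dominates S w.toFinset) : #(star S w) = #S := by
  induction w generalizing S with
  | nil => rfl
  | cons m w ih =>
    rw [List.nodup_cons] at hw
    have hmw : m ∉ w.toFinset := fun h => hw.1 (List.mem_toFinset.mp h)
    have hS' := hS.starLetter_erase (List.mem_toFinset.mpr List.mem_cons_self)
    rw [List.toFinset_cons, erase_insert hmw] at hS'
    exact (ih hw.2 hS').trans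
      (card_starLetter_of_exists (hS.exists_le (List.mem_toFinset.mpr List.mem_cons_self)))

lemma dominates_toFinset_of_getD_lt {C D : List ℕ} (hC : C.Pairwise (· > ·))
    (hD : D.Pairwise (· > ·)) (hlen : D.length ≤ C.length)
    (hrow : ∀ r < D.length, D.getD r 0 < C.getD r 0) : Dominates C.toFinset D.toFinset := by
  induction D generalizing C with
  | nil => intro x; simp
  | cons d D ih =>
    obtain _ | ⟨c, C⟩ := C
    · simp at hlen
    rw [List.pairwise_cons] at hC hD
    have hdc : d < c := hrow 0 (by simp)
    have ih := ih hC.2 hD.2 (by simpa using hlen) fun r hr => hrow (r + 1) (by simpa using hr)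
    intro x
    by_cases hxd : x ≤ d
    · have hd : d ∉ D.toFinset.filter (x ≤ ·) := fun h =>
        (hD.1 d (List.mem_toFinset.mp (mem_filter.mp h).1)).false
      have hc : c ∉ C.toFinset.filter (x ≤ ·) := fun h =>
        (hC.1 c (List.mem_toFinset.mp (mem_filter.mp h).1)).false
      rw [List.toFinset_cons, List.toFinset_cons, filter_insert, filter_insert, if_pos hxd,
        if_pos (hxd.trans hdc.le), card_insert_of_notMem hd, card_insert_of_notMem hc]
      exact Nat.succ_le_succ (ih x)
    · rw [card_eq_zero.mpr (filter_eq_empty_iff.mpr fun a ha => ?_)]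
      · exact Nat.zero_le _
      · rcases List.mem_cons.mp (List.mem_toFinset.mp ha) with rfl | ha
        · exact hxd
        · exact fun hxa => hxd (hxa.trans (hD.1 a ha).le)

lemma IsDecTab.drop {T : List (List ℕ)} (hT : IsDecTab T) (j : ℕ) : IsDecTab (T.drop j) :=
  ⟨fun C hC => hT.1 C (List.mem_of_mem_drop hC), hT.2.drop j⟩

lemma IsDecTab.pairwise_of_mem {T : List (List ℕ)} (hT : IsDecTab T) {C : List ℕ} (hC : C ∈ T) :
    C.Pairwise (· > ·) :=
  List.isChain_iff_pairwise.mp (hT.1 C hC)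

lemma colWord_cons (C : List ℕ) (T : List (List ℕ)) :
    colWord (C :: T) = C.reverse ++ colWord T := by
  simp [colWord]

lemma toFinset_subset_star_reverse {C : List ℕ} (hC : C.Pairwise (· > ·)) (S : Finset ℕ) :
    C.toFinset ⊆ star S C.reverse := by
  rw [← List.toFinset_reverse]
  exact toFinset_subset_star (List.pairwise_reverse.mpr hC) S

lemma card_star_colWord {C : List ℕ} {L : List (List ℕ)} (hT : IsDecTab (C :: L)) {S : Finset ℕ}
    (hS : Dominates S C.toFinset) : #(star S (colWord L)) = #S := by
  induction L generalizing C S with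
  | nil => rfl
  | cons D L ih =>
    obtain ⟨⟨hlen, hrow⟩, hchain⟩ := List.isChain_cons_cons.mp hT.2
    have hC := hT.pairwise_of_mem List.mem_cons_self
    have hD := hT.pairwise_of_mem (List.mem_cons_of_mem _ List.mem_cons_self)
    have hSD := hS.trans (dominates_toFinset_of_getD_lt hC hD hlen hrow)
    have hDL : IsDecTab (D :: L) := ⟨fun E hE => hT.1 E (List.mem_cons_of_mem _ hE), hchain⟩
    rw [colWord_cons, star_append, ih hDL (dominates_of_subset (toFinset_subset_star_reverse hD S)),
      card_star_of_dominates (List.nodup_reverse.mpr hD.nodup) (by rwa [List.toFinset_reverse])]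

lemma Kcol_eq_star_getElem {T : List (List ℕ)} (hT : IsDecTab T) {j : ℕ} (hj : j < T.length) :
    Kcol T j = star T[j].toFinset (colWord (T.drop (j + 1))) := by
  rw [Kcol, List.drop_eq_getElem_cons hj, colWord_cons, star_append,
    star_empty_eq_toFinset (List.pairwise_reverse.mpr (hT.pairwise_of_mem (List.getElem_mem hj))),
    List.toFinset_reverse]

/-- **The right key is a key.**  For a decreasing tableau `P` of partition shape,
the right key `K₊(P)` is a key: each column contains the next column as a set, and
the `j`-th column has size equal to the length of the `j`-th column of `P`. -/
theorem stmt17 (T : List (List ℕ)) (hT : IsDecTab T) :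
    ∀ j : ℕ, Kcol T (j + 1) ⊆ Kcol T j ∧ (Kcol T j).card = (T.getD j []).length := by
  intro j
  rcases lt_or_ge j T.length with hj | hj
  · have hcol : IsDecTab (T[j] :: T.drop (j + 1)) := List.drop_eq_getElem_cons hj ▸ hT.drop j
    rw [Kcol_eq_star_getElem hT hj, Kcol, List.getD_eq_getElem _ _ hj,
      card_star_colWord hcol (dominates_of_subset subset_rfl),
      List.toFinset_card_of_nodup (hT.pairwise_of_mem (List.getElem_mem hj)).nodup]
    exact ⟨star_mono _ (empty_subset _), rfl⟩
  · simp [Kcol, colWord, List.drop_eq_nil_of_le hj,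
      List.drop_eq_nil_of_le (hj.trans (Nat.le_succ j)), List.getElem?_eq_none hj]
end
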